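/- arXiv:0712.3568 — 5 statements merged into one kernel-verified Lean document; each statement's English description precedes it below -/
import Mathlib

section
/- For every Steiner tree T (a tree in G containing all terminals R) and every Steiner partition π of V (a partition each of whose parts contains at least one terminal), the incidence vector x of T satisfies Σ_{e ∈ E_π} x_e ≥ r(π) − 1. -/
/-!
Contract every edge of `T` that lies inside a part of `π`. Since every part contains a terminal
and `T` spans the terminals, the contracted graph has one vertex per part; it is connected because
`T` is, so it has at least `r(π) - 1` edges, and each of them is the image of an edge of `T`
crossing `π`.
-/

namespace SimpleGraph

variable {V W : Type*} {G : SimpleGraph V}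

theorem Walk.reachable_map_apply (f : V → W) {u v : V} (p : G.Walk u v) :
    (G.map f).Reachable (f u) (f v) := by
  induction p with
  | nil => rfl
  | @cons x y _ hxy _ ih =>
    by_cases hf : f x = f y
    · exact hf ▸ ih
    · exact (map_adj_apply' hxy hf).reachable.trans ih

theorem Connected.map_of_surjective {f : V → W} (hf : f.Surjective) (hG : G.Connected) :
    (G.map f).Connected :=
  have := hG.nonempty.map f
  ⟨hf.forall₂.2 fun u v => (hG u v).some.reachable_map_apply f⟩

theorem edgeSet_map_subset_image_crossing (f : V → W) :
    (G.map f).edgeSet ⊆ Sym2.map f '' {e ∈ G.edgeSet | ¬ (e.map f).IsDiag} := by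
  rintro e he
  induction e using Sym2.ind with
  | _ a b =>
    obtain ⟨hab, x, y, hxy, rfl, rfl⟩ := he
    exact ⟨s(x, y), ⟨hxy, by simpa using hab⟩, rfl⟩

theorem Connected.card_range_le_ncard_crossing_add_one [Finite V] (hG : G.Connected)
    (f : V → W) :
    Nat.card (Set.range f) ≤ {e ∈ G.edgeSet | ¬ (e.map f).IsDiag}.ncard + 1 := by
  set g := Set.rangeFactorization f
  have hdiag_iff (e : Sym2 V) : (e.map g).IsDiag ↔ (e.map f).IsDiag := by
    rw [← Sym2.isDiag_map Subtype.val_injective, Sym2.map_map, Set.rangeFactorization_eq]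
  calc Nat.card (Set.range f) ≤ Nat.card (G.map g).edgeSet + 1 :=
        (hG.map_of_surjective Set.rangeFactorization_surjective).card_vert_le_card_edgeSet_add_one
    _ ≤ (Sym2.map g '' {e ∈ G.edgeSet | ¬ (e.map g).IsDiag}).ncard + 1 := by
      gcongr
      exact Set.ncard_le_ncard (edgeSet_map_subset_image_crossing g) (Set.toFinite _)
    _ ≤ _ := by
      simp only [hdiag_iff]
      gcongr
      exact Set.ncard_image_le (Set.toFinite _)

end SimpleGraph

theorem Finpartition.image_part_eq_parts {α : Type*} [DecidableEq α] {s : Finset α}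
    (P : Finpartition s) {S : Set α} (hSs : S ⊆ s) (hS : ∀ p ∈ P.parts, ∃ a ∈ S, a ∈ p) :
    P.part '' S = P.parts := by
  refine subset_antisymm ?_ fun p hp => ?_
  · rintro _ ⟨a, ha, rfl⟩
    exact P.part_mem.2 (hSs ha)
  · obtain ⟨a, ha, hap⟩ := hS p hp
    exact ⟨a, ha, P.part_eq_of_mem hp hap⟩

open scoped Classical in
/-- (Steiner partition inequality, Chopra–Rao.) For every Steiner tree
`T` (a subtree of `G` containing all terminals `R`) and every Steiner partition `π` of
`V` (each part contains a terminal), the incidence vector of `T` satisfies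
`∑_{e ∈ E_π} x_e ≥ r(π) - 1`. -/
theorem stmt2 {V : Type*} [Fintype V] (G : SimpleGraph V) (R : Finset V)
    (T : G.Subgraph) (hT : T.coe.IsTree) (hR : (R : Set V) ⊆ T.verts)
    (π : Finpartition (⊤ : Finset V))
    (hπ : ∀ P ∈ π.parts, ∃ t ∈ R, t ∈ P) :
    (π.parts.card : ℝ) - 1 ≤
      ({e ∈ T.edgeSet | ¬ ∃ P ∈ π.parts, ∀ v ∈ e, v ∈ P}).ncard := by
  set f : T.verts → Finset V := fun v => π.part v
  have hrange : Nat.card (Set.range f) = π.parts.card := by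
    rw [show f = π.part ∘ (↑) from rfl, Set.range_comp, Subtype.range_coe,
      π.image_part_eq_parts (fun v _ => by simp)
        fun P hP => (hπ P hP).imp fun t ⟨htR, htP⟩ => ⟨hR htR, htP⟩,
      Nat.card_coe_set_eq, Set.ncard_coe_finset]
  have hcross : {e ∈ T.coe.edgeSet | ¬ (e.map f).IsDiag}.ncard ≤
      ({e ∈ T.edgeSet | ¬ ∃ P ∈ π.parts, ∀ v ∈ e, v ∈ P}).ncard := by
    refine Set.ncard_le_ncard_of_injOn (Sym2.map (↑)) ?_
      (Sym2.map.injective Subtype.val_injective).injOn (Set.toFinite _)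
    rintro e ⟨he, hdiag⟩
    induction e using Sym2.ind with
    | _ x y =>
      refine ⟨by simpa using he, ?_⟩
      rintro ⟨P, hP, hxy⟩
      simp only [Sym2.map_mk, Sym2.mem_iff, forall_eq_or_imp, forall_eq] at hxy hdiag
      exact hdiag ((π.part_eq_of_mem hP hxy.1).trans (π.part_eq_of_mem hP hxy.2).symm)
  have key := hrange ▸ hT.connected.card_range_le_ncard_crossing_add_one f
  rw [sub_le_iff_le_add]
  exact_mod_cast key.trans (Nat.add_le_add_right hcross 1)
end

section
/- If S is a family of pairwise edge-disjoint and internally vertex-disjoint full components, then the loss of the union graph equals the union of the losses of the components: L(∪S) = ∪_{K∈S} L(K), and hence l(∪S) = Σ_{K∈S} l(K). -/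
/-!
The loss of the union is obtained componentwise. Any connector `F'` of the union restricts to a
connector `F' ∩ E(K)` of each component `K`: a vertex of `K` that is not a terminal belongs to no
other component, so a path of `F'` from a vertex of `K` stays in `K` until it first meets a
terminal. Edge-disjointness then makes the cost of `F'` at least the sum of the component losses,
which is the cost of their union.
-/

open scoped Classical

noncomputable section

/-- A full component on terminal set `R`. -/
structure FullComp {V : Type*} [Fintype V] (G : SimpleGraph V) (R : Set V) where
  sub : G.Subgraph
  tree : sub.coe.IsTree
  leaf_iff : ∀ v ∈ sub.verts, v ∈ R ↔ sub.degree v = 1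

/-- `F` is a candidate loss ("connector") for the subgraph `H`: a subset of the edges of
`H` such that every vertex of `H` is connected by `F`-edges to some terminal. -/
def IsConnector {V : Type*} {G : SimpleGraph V} (R : Set V) (H : G.Subgraph)
    (F : Set (Sym2 V)) : Prop :=
  F ⊆ H.edgeSet ∧ ∀ v ∈ H.verts, ∃ t ∈ R, (SimpleGraph.fromEdgeSet F).Reachable v t

open SimpleGraph

lemma SimpleGraph.Walk.exists_reachable_mem_of_adj_of_notMem {V : Type*} {G H : SimpleGraph V}
    {R S : Set V} (hstep : ∀ a b, G.Adj a b → a ∈ S → a ∉ R → H.Adj a b ∧ b ∈ S)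
    {v t : V} (p : G.Walk v t) (hv : v ∈ S) (ht : t ∈ R) : ∃ t' ∈ R, H.Reachable v t' := by
  induction p with
  | nil => exact ⟨_, ht, .refl _⟩
  | @cons u w _ hadj _ ih =>
    by_cases huR : u ∈ R
    · exact ⟨u, huR, .refl u⟩
    · obtain ⟨hH, hw⟩ := hstep u w hadj hv huR
      obtain ⟨t', ht', hr⟩ := ih hw ht
      exact ⟨t', ht', hH.reachable.trans hr⟩

lemma finsum_mem_le_finsum_mem_of_subset {α : Type*} {f : α → ℝ} (hf : ∀ a, 0 ≤ f a)
    {s t : Set α} (hst : s ⊆ t) (ht : t.Finite) : ∑ᶠ a ∈ s, f a ≤ ∑ᶠ a ∈ t, f a :=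
  calc ∑ᶠ a ∈ s, f a ≤ (∑ᶠ a ∈ s, f a) + ∑ᶠ a ∈ t \ s, f a :=
        le_add_of_nonneg_right (finsum_nonneg fun a => finsum_nonneg fun _ => hf a)
    _ = ∑ᶠ a ∈ t, f a := finsum_mem_add_sdiff hst ht

lemma finsum_mem_finset_biUnion {ι α M : Type*} [Finite α] [AddCommMonoid M] (f : α → M)
    {s : Finset ι} {t : ι → Set α} (h : (s : Set ι).PairwiseDisjoint t) :
    ∑ᶠ a ∈ ⋃ i ∈ s, t i, f a = ∑ i ∈ s, ∑ᶠ a ∈ t i, f a := by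
  rw [← finsum_mem_coe_finset, ← finsum_mem_biUnion h s.finite_toSet fun i _ => (t i).toFinite]
  simp only [Finset.mem_coe]

section

variable {V ι : Type*} {G : SimpleGraph V} {R : Set V} {H : ι → G.Subgraph} {s : Set ι}

lemma IsConnector.biUnion {F : ι → Set (Sym2 V)} (hF : ∀ i ∈ s, IsConnector R (H i) (F i)) :
    IsConnector R (⨆ i ∈ s, H i) (⋃ i ∈ s, F i) := by
  refine ⟨Set.iUnion₂_subset fun i hi =>
    (hF i hi).1.trans (Subgraph.edgeSet_mono (le_biSup H hi)), fun v hv => ?_⟩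
  simp only [Subgraph.verts_iSup, Set.mem_iUnion] at hv
  obtain ⟨i, hi, hv⟩ := hv
  obtain ⟨t, ht, hr⟩ := (hF i hi).2 v hv
  exact ⟨t, ht, hr.mono (fromEdgeSet_mono (Set.subset_biUnion_of_mem hi))⟩

lemma IsConnector.inter_edgeSet {F : Set (Sym2 V)} {i : ι}
    (hV : ∀ i ∈ s, ∀ j ∈ s, i ≠ j → (H i).verts ∩ (H j).verts ⊆ R)
    (hF : IsConnector R (⨆ i ∈ s, H i) F) (hi : i ∈ s) :
    IsConnector R (H i) (F ∩ (H i).edgeSet) := by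
  refine ⟨Set.inter_subset_right, fun v hv => ?_⟩
  have hv' : v ∈ (⨆ i ∈ s, H i).verts := Subgraph.verts_mono (le_biSup H hi) hv
  obtain ⟨t, ht, ⟨p⟩⟩ := hF.2 v hv'
  refine p.exists_reachable_mem_of_adj_of_notMem (fun a b hab ha haR => ?_) hv ht
  rw [fromEdgeSet_adj] at hab
  have hsup : (⨆ i ∈ s, H i).Adj a b := hF.1 hab.1
  simp only [Subgraph.iSup_adj] at hsup
  obtain ⟨j, hj, hadj⟩ := hsup
  obtain rfl : j = i := by
    by_contra hji
    exact haR (hV i hi j hj (Ne.symm hji) ⟨ha, hadj.fst_mem⟩)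
  exact ⟨(fromEdgeSet_adj _).2 ⟨⟨hab.1, hadj⟩, hab.2⟩, hadj.snd_mem⟩

end

/-- If `𝒮` is a family of pairwise edge-disjoint and internally
vertex-disjoint full components, then the loss of the union graph is the union of the
losses of the components, and hence `l(∪𝒮) = ∑_{K ∈ 𝒮} l(K)`. -/
theorem stmt5 {V : Type*} [Fintype V] (G : SimpleGraph V) (R : Finset V)
    (c : Sym2 V → ℝ) (hc : ∀ e, 0 ≤ c e)
    (𝒮 : Finset (FullComp G (R : Set V)))
    (hdisjE : ∀ K ∈ 𝒮, ∀ K' ∈ 𝒮, K ≠ K' → Disjoint K.sub.edgeSet K'.sub.edgeSet)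
    (hdisjV : ∀ K ∈ 𝒮, ∀ K' ∈ 𝒮, K ≠ K' →
      K.sub.verts ∩ K'.sub.verts ⊆ (R : Set V))
    (F : FullComp G (R : Set V) → Set (Sym2 V))
    (hF : ∀ K ∈ 𝒮, IsConnector (R : Set V) K.sub (F K) ∧
      ∀ F', IsConnector (R : Set V) K.sub F' →
        (∑ᶠ e ∈ F K, c e) ≤ ∑ᶠ e ∈ F', c e) :
    (IsConnector (R : Set V) (⨆ K ∈ 𝒮, K.sub) (⋃ K ∈ 𝒮, F K) ∧
      ∀ F', IsConnector (R : Set V) (⨆ K ∈ 𝒮, K.sub) F' →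
        (∑ᶠ e ∈ ⋃ K ∈ 𝒮, F K, c e) ≤ ∑ᶠ e ∈ F', c e) ∧
    (∑ᶠ e ∈ ⋃ K ∈ 𝒮, F K, c e) = ∑ K ∈ 𝒮, ∑ᶠ e ∈ F K, c e := by
  have hE : (𝒮 : Set (FullComp G (R : Set V))).PairwiseDisjoint fun K => K.sub.edgeSet :=
    fun K hK K' hK' => hdisjE K hK K' hK'
  have hsum := finsum_mem_finset_biUnion c (hE.mono_on fun K hK => (hF K hK).1.1)
  refine ⟨⟨IsConnector.biUnion fun K hK => (hF K hK).1, fun F' hF' => ?_⟩, hsum⟩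
  calc (∑ᶠ e ∈ ⋃ K ∈ 𝒮, F K, c e) = ∑ K ∈ 𝒮, ∑ᶠ e ∈ F K, c e := hsum
    _ ≤ ∑ K ∈ 𝒮, ∑ᶠ e ∈ F' ∩ K.sub.edgeSet, c e := Finset.sum_le_sum fun K hK =>
        (hF K hK).2 _ (hF'.inter_edgeSet hdisjV hK)
    _ = ∑ᶠ e ∈ ⋃ K ∈ 𝒮, F' ∩ K.sub.edgeSet, c e :=
        (finsum_mem_finset_biUnion c (hE.mono_on fun _ _ => Set.inter_subset_right)).symm
    _ ≤ ∑ᶠ e ∈ F', c e := finsum_mem_le_finsum_mem_of_subset hc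
        (Set.iUnion₂_subset fun _ _ => Set.inter_subset_left) F'.toFinite
end
end

section
/- In a tree K with nonnegative edge costs, let u,v be a pair of leaves maximizing the path cost c(P_{uv}) (the diameter Δ(K)). Then a depth-first traversal from u to v yields a walk of cost 2·c(K) − Δ(K) visiting all leaves, so the metric-closure minimum spanning tree of the leaves of K has cost at most 2·c(K) − Δ(K). -/
/-!
Double every edge of the tree `K` and remove the edges of the path `q` from `u` to `v`: the
resulting multiset of edges is traced by a walk from `u` to `v` through every vertex, which
leaves `q` only for detours that run out along an edge and straight back. This is an induction
over subtrees containing `q`, deleting one pendant vertex off `q` at a time, and the walk costs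
`2·c(K) - c(q)`.

Listing the leaves in the order the walk passes them and joining consecutive ones gives a
spanning path of the leaves. By the triangle inequality for the metric closure, skipping
vertices of the walk only lowers the cost, so this path costs at most as much as the walk.
-/

open scoped Classical

noncomputable section

variable {V : Type*}

/-- Cost of a walk: sum of the costs of its edges (edges repeated by the walk are
counted with multiplicity). -/
def walkCost (c : Sym2 V → ℝ) {G : SimpleGraph V} {u v : V} (p : G.Walk u v) : ℝ :=
  (p.edges.map c).sum

namespace List

variable {α β : Type*}

def consecPairs : List α → List (Sym2 α)
  | [] => []
  | [_] => []
  | a :: b :: l => s(a, b) :: consecPairs (b :: l)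

@[simp] lemma consecPairs_nil : consecPairs ([] : List α) = [] := rfl
@[simp] lemma consecPairs_singleton (a : α) : consecPairs [a] = [] := rfl
@[simp] lemma consecPairs_cons_cons (a b : α) (l : List α) :
    consecPairs (a :: b :: l) = s(a, b) :: consecPairs (b :: l) := rfl

lemma consecPairs_map (f : α → β) (l : List α) :
    consecPairs (l.map f) = (consecPairs l).map (Sym2.map f) := by
  induction l with
  | nil => rfl
  | cons a l ih => cases l <;> simp_all

lemma length_consecPairs (l : List α) : (consecPairs l).length = l.length - 1 := by
  induction l with
  | nil => rfl
  | cons a l ih => cases l <;> simp_all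

lemma mem_of_mem_consecPairs {l : List α} {e : Sym2 α} (he : e ∈ consecPairs l) {a : α}
    (ha : a ∈ e) : a ∈ l := by
  induction l with
  | nil => simp at he
  | cons x l ih =>
    cases l with
    | nil => simp at he
    | cons y l =>
      rw [consecPairs_cons_cons, mem_cons] at he
      rcases he with rfl | he
      · rcases Sym2.mem_iff.1 ha with rfl | rfl <;> simp
      · exact mem_cons_of_mem _ (ih he)

lemma nodup_consecPairs {l : List α} (hl : l.Nodup) : (consecPairs l).Nodup := by
  induction l with
  | nil => simp
  | cons x l ih =>
    cases l with
    | nil => simp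
    | cons y l =>
      rw [consecPairs_cons_cons]
      exact (ih hl.of_cons).cons fun h => (nodup_cons.1 hl).1 (mem_of_mem_consecPairs h (by simp))

section Cost

variable {w : Sym2 α → ℝ} (hw : ∀ e, 0 ≤ w e)
include hw

lemma sum_consecPairs_le_cons (a : α) (l : List α) :
    ((consecPairs l).map w).sum ≤ ((consecPairs (a :: l)).map w).sum := by
  cases l with
  | nil => simp
  | cons b l => simpa using hw s(a, b)

variable (htri : ∀ a b c, w s(a, c) ≤ w s(a, b) + w s(b, c))
include htri

lemma Sublist.sum_consecPairs_cons_le {l₁ l₂ : List α} (h : l₁ <+ l₂) (a : α) :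
    ((consecPairs (a :: l₁)).map w).sum ≤ ((consecPairs (a :: l₂)).map w).sum := by
  induction h generalizing a with
  | slnil => rfl
  | @cons l₁ l₂ b _ ih =>
    cases l₁ with
    | nil => simpa using add_nonneg (hw s(a, b)) (sum_nonneg (by simp [hw]))
    | cons c l₁ =>
      have := ih b
      simp only [consecPairs_cons_cons, map_cons, sum_cons] at this ⊢
      linarith [htri a b c]
  | cons_cons b _ ih => simpa using ih b

lemma Sublist.sum_consecPairs_le {l₁ l₂ : List α} (h : l₁ <+ l₂) :
    ((consecPairs l₁).map w).sum ≤ ((consecPairs l₂).map w).sum := by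
  induction h with
  | slnil => rfl
  | cons b _ ih => exact ih.trans (sum_consecPairs_le_cons hw b _)
  | cons_cons b h => exact h.sum_consecPairs_cons_le hw htri b

end Cost

def toPathGraph (l : List α) : SimpleGraph α :=
  SimpleGraph.fromEdgeSet {e | e ∈ consecPairs l}

lemma toPathGraph_mono_cons (a : α) (l : List α) : l.toPathGraph ≤ (a :: l).toPathGraph := by
  refine SimpleGraph.fromEdgeSet_mono fun e he => ?_
  cases l with
  | nil => simp at he
  | cons b l => exact mem_cons_of_mem _ he

lemma toPathGraph_reachable_head {l : List α} (hl : l ≠ []) {x : α} (hx : x ∈ l) :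
    l.toPathGraph.Reachable (l.head hl) x := by
  induction l with
  | nil => contradiction
  | cons a l ih =>
    rcases mem_cons.1 hx with rfl | hx
    · rfl
    obtain ⟨b, l, rfl⟩ := exists_cons_of_ne_nil (ne_nil_of_mem hx)
    have hab : (a :: b :: l).toPathGraph.Reachable a b := by
      by_cases h : a = b
      · exact h ▸ .refl a
      · exact SimpleGraph.Adj.reachable (by simp [toPathGraph, h])
    exact hab.trans ((ih (cons_ne_nil _ _) hx).mono (toPathGraph_mono_cons a _))

lemma not_isDiag_of_mem_consecPairs {l : List α} (hl : l.Nodup) {e : Sym2 α}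
    (he : e ∈ consecPairs l) : ¬e.IsDiag := by
  induction l with
  | nil => simp at he
  | cons x l ih =>
    cases l with
    | nil => simp at he
    | cons y l =>
      rw [consecPairs_cons_cons, mem_cons] at he
      rcases he with rfl | he
      · rintro (rfl : x = y)
        exact (nodup_cons.1 hl).1 (mem_cons_self)
      · exact ih hl.of_cons he

lemma edgeSet_toPathGraph {l : List α} (hl : l.Nodup) :
    l.toPathGraph.edgeSet = {e | e ∈ consecPairs l} := by
  rw [toPathGraph, SimpleGraph.edgeSet_fromEdgeSet, sdiff_eq_left, Set.disjoint_left]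
  exact fun _ => not_isDiag_of_mem_consecPairs hl

lemma isTree_toPathGraph [Nonempty α] {l : List α} (hl : l.Nodup) (hall : ∀ x, x ∈ l) :
    l.toPathGraph.IsTree := by
  have hne : l ≠ [] := ne_nil_of_mem (hall (Classical.arbitrary α))
  let e : Fin l.length ≃ α := hl.getEquivOfForallMemList l hall
  have : Finite α := .intro e.symm
  refine SimpleGraph.isTree_iff_connected_and_card.2 ⟨?_, ?_⟩
  · exact (SimpleGraph.connected_iff _).2 ⟨fun x y =>
      (toPathGraph_reachable_head hne (hall x)).symm.trans
        (toPathGraph_reachable_head hne (hall y)), inferInstance⟩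
  · rw [edgeSet_toPathGraph hl, Nat.card_congr e.symm,
      Nat.card_fin, ← coe_toFinset, Nat.card_coe_set_eq,
      Set.ncard_coe_finset, toFinset_card_of_nodup (nodup_consecPairs hl), length_consecPairs]
    have := length_pos_iff.2 hne
    omega

lemma finsum_edgeSet_toPathGraph (f : Sym2 α → ℝ) {l : List α} (hl : l.Nodup) :
    ∑ᶠ e ∈ l.toPathGraph.edgeSet, f e = ((consecPairs l).map f).sum := by
  rw [edgeSet_toPathGraph hl, ← coe_toFinset, finsum_mem_coe_finset,
    sum_toFinset _ (nodup_consecPairs hl)]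

theorem exists_isTree_finsum_le_sum_consecPairs [Nonempty α] {w : Sym2 α → ℝ}
    (hw : ∀ e, 0 ≤ w e) (htri : ∀ a b c, w s(a, c) ≤ w s(a, b) + w s(b, c)) (l : List α)
    (hall : ∀ x, x ∈ l) :
    ∃ T : SimpleGraph α, T.IsTree ∧ ∑ᶠ e ∈ T.edgeSet, w e ≤ ((consecPairs l).map w).sum :=
  ⟨l.dedup.toPathGraph, isTree_toPathGraph (nodup_dedup l) (by simpa using hall), by
    rw [finsum_edgeSet_toPathGraph _ (nodup_dedup l)]
    exact (dedup_sublist l).sum_consecPairs_le hw htri⟩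

end List

namespace SimpleGraph

variable {G K : SimpleGraph V} {c w : Sym2 V → ℝ}

lemma Walk.consecPairs_support {u v : V} (p : G.Walk u v) : p.support.consecPairs = p.edges := by
  induction p with
  | nil => rfl
  | cons h p ih => rw [Walk.support_cons, ← p.cons_tail_support, List.consecPairs_cons_cons,
      p.cons_tail_support, ih, Walk.edges_cons]

lemma walkCost_append {u v x : V} (p : G.Walk u v) (q : G.Walk v x) :
    walkCost c (p.append q) = walkCost c p + walkCost c q := by
  simp [walkCost]

lemma walkCost_nonneg (hc : ∀ e, 0 ≤ c e) {u v : V} (p : G.Walk u v) : 0 ≤ walkCost c p :=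
  List.sum_nonneg (by simp [hc])

lemma walkCost_bypass_le (hc : ∀ e, 0 ≤ c e) {u v : V} (p : G.Walk u v) :
    walkCost c p.bypass ≤ walkCost c p :=
  (p.edges_bypass_sublist_edges.map c).sum_le_sum (by simp [hc])

/-- In a tree, these are the vertex sets of the subtrees. -/
def IsPathClosed (K : SimpleGraph V) (S : Finset V) : Prop :=
  ∀ ⦃a b : V⦄ (p : K.Walk a b), p.IsPath → a ∈ S → b ∈ S → ∀ x ∈ p.support, x ∈ S

def edgesIn (K : SimpleGraph V) (S : Finset V) : Finset (Sym2 V) :=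
  S.sym2.filter (· ∈ K.edgeSet)

lemma mem_edgesIn {S : Finset V} {e : Sym2 V} :
    e ∈ K.edgesIn S ↔ (∀ a ∈ e, a ∈ S) ∧ e ∈ K.edgeSet := by
  simp [edgesIn, Finset.mem_sym2_iff]

lemma IsAcyclic.mk_mem_edges_of_adj (hK : K.IsAcyclic) {u v a b : V} (p : K.Walk u v)
    (hab : K.Adj a b) (ha : a ∈ p.support) (hb : b ∈ p.support) : s(a, b) ∈ p.edges := by
  have hbridge := isBridge_iff_forall_walk_mem_edges.1 (isAcyclic_iff_forall_adj_isBridge.1 hK hab)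
  have := hbridge ((p.takeUntil a ha).reverse.append (p.takeUntil b hb))
  rw [Walk.edges_append, Walk.edges_reverse, List.mem_append, List.mem_reverse] at this
  rcases this with h | h
  · exact p.edges_takeUntil_subset_edges ha h
  · exact p.edges_takeUntil_subset_edges hb h

lemma IsAcyclic.edgesIn_val_eq_edges (hK : K.IsAcyclic) {S : Finset V} {u v : V}
    {q : K.Walk u v} (hq : q.IsPath) (hSq : ∀ x ∈ S, x ∈ q.support)
    (hqS : ∀ x ∈ q.support, x ∈ S) : (K.edgesIn S).val = q.edges := by
  refine (Multiset.Nodup.ext (K.edgesIn S).nodup (Multiset.coe_nodup.2 hq.edges_nodup)).2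
    fun e => ?_
  induction e using Sym2.ind with
  | _ a b =>
  simp only [Finset.mem_val, mem_edgesIn, Sym2.forall_mem_pair, mem_edgeSet, Multiset.mem_coe]
  constructor
  · rintro ⟨⟨ha, hb⟩, hab⟩
    exact hK.mk_mem_edges_of_adj q hab (hSq a ha) (hSq b hb)
  · intro he
    exact ⟨⟨hqS a (q.fst_mem_support_of_mem_edges he),
      hqS b (q.snd_mem_support_of_mem_edges he)⟩, q.adj_of_mem_edges he⟩

lemma IsPathClosed.erase {S : Finset V} (hS : K.IsPathClosed S) {x y : V}
    (hy : ∀ z ∈ S, K.Adj x z → z = y) : K.IsPathClosed (S.erase x) := by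
  intro a b p hp ha hb z hz
  obtain ⟨hxa, haS⟩ := Finset.mem_erase.1 ha
  obtain ⟨hxb, hbS⟩ := Finset.mem_erase.1 hb
  refine Finset.mem_erase.2 ⟨?_, hS p hp haS hbS z hz⟩
  -- an interior vertex of a path has two distinct neighbours on it, but `x` has one in `S`
  rintro rfl
  have hpS := hS p hp haS hbS
  have h₁ : ¬(p.takeUntil z hz).Nil := Walk.not_nil_of_ne hxa
  have h₂ : ¬(p.dropUntil z hz).Nil := Walk.not_nil_of_ne hxb.symm
  have e₁ := Walk.mk_penultimate_end_mem_edges h₁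
  have e₂ := Walk.mk_start_snd_mem_edges h₂
  have y₁ := hy _ (hpS _ (p.support_takeUntil_subset_support hz
    ((p.takeUntil z hz).fst_mem_support_of_mem_edges e₁))) (Walk.adj_penultimate h₁).symm
  have y₂ := hy _ (hpS _ (p.support_dropUntil_subset_support hz
    ((p.dropUntil z hz).snd_mem_support_of_mem_edges e₂))) (Walk.adj_snd h₂)
  rw [y₁, Sym2.eq_swap] at e₁
  rw [y₂] at e₂
  exact hp.isTrail.disjoint_edges_takeUntil_dropUntil hz e₁ e₂

lemma edgesIn_val_eq_cons_erase {S : Finset V} {x y : V} (hxS : x ∈ S) (hyS : y ∈ S)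
    (hxy : K.Adj x y) (hy : ∀ z ∈ S, K.Adj x z → z = y) :
    (K.edgesIn S).val = s(x, y) ::ₘ (K.edgesIn (S.erase x)).val := by
  have hnotMem : s(x, y) ∉ K.edgesIn (S.erase x) := by simp [mem_edgesIn]
  rw [← Finset.insert_val_of_notMem hnotMem]
  congr 1
  ext e
  induction e using Sym2.ind with
  | _ a b =>
  simp only [Finset.mem_insert, mem_edgesIn, Sym2.forall_mem_pair, mem_edgeSet, Finset.mem_erase,
    Sym2.eq_iff]
  constructor
  · rintro ⟨⟨ha, hb⟩, hab⟩
    by_cases hax : a = x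
    · subst hax; exact Or.inl (Or.inl ⟨rfl, hy b hb hab⟩)
    by_cases hbx : b = x
    · subst hbx; exact Or.inl (Or.inr ⟨hy a ha hab.symm, rfl⟩)
    exact Or.inr ⟨⟨⟨hax, ha⟩, ⟨hbx, hb⟩⟩, hab⟩
  · rintro ((⟨rfl, rfl⟩ | ⟨rfl, rfl⟩) | ⟨⟨⟨-, ha⟩, ⟨-, hb⟩⟩, hab⟩)
    · exact ⟨⟨hxS, hyS⟩, hxy⟩
    · exact ⟨⟨hyS, hxS⟩, hxy.symm⟩
    · exact ⟨⟨ha, hb⟩, hab⟩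

lemma IsTree.exists_pendant_of_notMem_support (hK : K.IsTree) {S : Finset V}
    (hS : K.IsPathClosed S) {u v : V} {q : K.Walk u v} (hq : q.IsPath) (hu : u ∈ S) {x₀ : V}
    (hx₀S : x₀ ∈ S) (hx₀q : x₀ ∉ q.support) :
    ∃ x ∈ S, x ∉ q.support ∧ ∃ y ∈ S, K.Adj x y ∧ ∀ z ∈ S, K.Adj x z → z = y := by
  -- `x` is a vertex of `S` off `q` farthest from `u`: a second neighbour in `S` would lie
  -- farther out, hence on `q`, and then so would `x`.
  choose P hP using fun a => (hK.connected u a).exists_isPath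
  obtain ⟨x, hxT, hmax⟩ := Finset.exists_max_image (S.filter (· ∉ q.support))
    (fun a => (P a).length) ⟨x₀, by simp [hx₀S, hx₀q]⟩
  rw [Finset.mem_filter] at hxT
  have hnil : ¬(P x).Nil := Walk.not_nil_of_ne (by rintro rfl; exact hxT.2 q.start_mem_support)
  have hPS := hS (P x) (hP x) hu hxT.1
  refine ⟨x, hxT.1, hxT.2, (P x).penultimate,
    hPS _ ((P x).fst_mem_support_of_mem_edges (Walk.mk_penultimate_end_mem_edges hnil)),
    (Walk.adj_penultimate hnil).symm, fun z hzS hxz => ?_⟩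
  by_contra hzy
  have hzP : z ∉ (P x).support := fun h =>
    hzy (hK.isAcyclic.eq_penultimate_of_adj_end (hP x) hxz h)
  have hzq : z ∈ q.support := by
    by_contra hzq
    have hPz := hK.isAcyclic.path_concat (hP x) (hP z) hxz <|
      hK.isAcyclic.mem_support_of_ne_mem_support_of_adj_of_isPath (hP z) (hP x) hxz.symm hzP
    have := hmax z (by simp [hzS, hzq])
    rw [hPz, Walk.length_concat] at this
    omega
  exact hzP <| hK.isAcyclic.mem_support_of_ne_mem_support_of_adj_of_isPath (hP x)
    (hq.takeUntil hzq) hxz (fun h => hxT.2 (q.support_takeUntil_subset_support hzq h))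

lemma Walk.exists_detour {u v x y : V} (p : G.Walk u v) (hy : y ∈ p.support) (h : G.Adj y x) :
    ∃ p' : G.Walk u v, x ∈ p'.support ∧ p.support ⊆ p'.support ∧
      (p'.edges : Multiset (Sym2 V)) = s(x, y) ::ₘ s(x, y) ::ₘ p.edges := by
  refine ⟨(p.takeUntil y hy).append (.cons h (.cons h.symm (p.dropUntil y hy))), ?_, ?_, ?_⟩
  · simp [Walk.mem_support_append_iff]
  · intro z hz
    rw [← p.take_spec hy, Walk.mem_support_append_iff] at hz
    rw [Walk.mem_support_append_iff, Walk.support_cons, Walk.support_cons]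
    rcases hz with hz | hz
    · exact Or.inl hz
    · exact Or.inr (List.mem_cons_of_mem _ (List.mem_cons_of_mem _ hz))
  · conv_rhs => rw [← p.take_spec hy]
    simp only [Walk.edges_append, Walk.edges_cons, Sym2.eq_swap (a := y) (b := x),
      ← Multiset.coe_add, ← Multiset.cons_coe, Multiset.add_cons]

theorem IsTree.exists_walk_edges_add_edges_eq (hK : K.IsTree) {u v : V} {q : K.Walk u v}
    (hq : q.IsPath) {S : Finset V} (hS : K.IsPathClosed S) (hu : u ∈ S) (hv : v ∈ S) :
    ∃ p : K.Walk u v, (∀ x ∈ S, x ∈ p.support) ∧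
      (p.edges : Multiset (Sym2 V)) + q.edges = 2 • (K.edgesIn S).val := by
  induction S using Finset.strongInduction with
  | H S ih =>
  have hqS : ∀ x ∈ q.support, x ∈ S := hS q hq hu hv
  by_cases hcov : ∀ x ∈ S, x ∈ q.support
  · exact ⟨q, hcov, by rw [hK.isAcyclic.edgesIn_val_eq_edges hq hcov hqS, two_smul]⟩
  push Not at hcov
  obtain ⟨x₀, hx₀S, hx₀q⟩ := hcov
  obtain ⟨x, hxS, hxq, y, hyS, hxy, hy⟩ :=
    hK.exists_pendant_of_notMem_support hS hq hu hx₀S hx₀q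
  have hmem_erase : ∀ z ∈ S, z ≠ x → z ∈ S.erase x := fun z hz hzx =>
    Finset.mem_erase.2 ⟨hzx, hz⟩
  obtain ⟨p, hpS, hp⟩ := ih (S.erase x) (Finset.erase_ssubset hxS) (hS.erase hy)
    (hmem_erase u hu (by rintro rfl; exact hxq q.start_mem_support))
    (hmem_erase v hv (by rintro rfl; exact hxq q.end_mem_support))
  obtain ⟨p', hxp', hsupp, hedges⟩ :=
    p.exists_detour (hpS y (hmem_erase y hyS hxy.ne')) hxy.symm
  refine ⟨p', fun z hz => ?_, ?_⟩
  · by_cases hzx : z = x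
    · exact hzx ▸ hxp'
    · exact hsupp (hpS z (hmem_erase z hz hzx))
  · rw [hedges, edgesIn_val_eq_cons_erase hxS hyS hxy hy]
    simp only [two_smul, Multiset.cons_add, Multiset.add_cons] at hp ⊢
    rw [hp]

theorem IsTree.exists_walk_walkCost_eq [Fintype V] (hK : K.IsTree) {u v : V} {q : K.Walk u v}
    (hq : q.IsPath) (c : Sym2 V → ℝ) :
    ∃ p : K.Walk u v, (∀ x, x ∈ p.support) ∧
      walkCost c p = 2 * (∑ᶠ e ∈ K.edgeSet, c e) - walkCost c q := by
  obtain ⟨p, hpS, hp⟩ := hK.exists_walk_edges_add_edges_eq hq (S := Finset.univ)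
    (fun _ _ _ _ _ _ x _ => Finset.mem_univ x) (Finset.mem_univ u) (Finset.mem_univ v)
  refine ⟨p, fun x => hpS x (Finset.mem_univ x), ?_⟩
  have hE : (K.edgesIn Finset.univ : Set (Sym2 V)) = K.edgeSet := by
    ext e
    simp [mem_edgesIn]
  have hsum := congrArg (fun m => (m.map c).sum) hp
  simp only [Multiset.map_add, Multiset.sum_add, Multiset.map_nsmul, Multiset.sum_nsmul,
    Multiset.map_coe, Multiset.sum_coe, Finset.sum_map_val, nsmul_eq_mul, Nat.cast_ofNat] at hsum
  rw [← hE, finsum_mem_coe_finset, walkCost, walkCost]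
  linarith

def IsPathCostClosure (K : SimpleGraph V) (c w : Sym2 V → ℝ) : Prop :=
  ∀ a b, ∀ p : K.Walk a b, p.IsPath → walkCost c p = w s(a, b)

namespace IsPathCostClosure

variable (hw : K.IsPathCostClosure c w) (hc : ∀ e, 0 ≤ c e)
include hw hc

lemma le_walkCost {a b : V} (p : K.Walk a b) : w s(a, b) ≤ walkCost c p :=
  hw a b _ p.bypass_isPath ▸ walkCost_bypass_le hc p

lemma le_of_adj {a b : V} (h : K.Adj a b) : w s(a, b) ≤ c s(a, b) := by
  simpa [walkCost] using hw.le_walkCost hc (.cons h .nil)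

lemma le_of_mem_edges {a b : V} {p : K.Walk a b} {e : Sym2 V} (he : e ∈ p.edges) :
    w e ≤ c e := by
  induction e using Sym2.ind with
  | _ x y => exact hw.le_of_adj hc (p.adj_of_mem_edges he)

variable (hK : K.Connected)
include hK

lemma nonneg (e : Sym2 V) : 0 ≤ w e := by
  induction e using Sym2.ind with
  | _ a b =>
    obtain ⟨p, hp⟩ := (hK a b).exists_isPath
    exact hw a b p hp ▸ walkCost_nonneg hc p

lemma triangle (a b x : V) : w s(a, x) ≤ w s(a, b) + w s(b, x) := by
  obtain ⟨p, hp⟩ := (hK a b).exists_isPath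
  obtain ⟨q, hq⟩ := (hK b x).exists_isPath
  simpa [walkCost_append, hw a b p hp, hw b x q hq] using hw.le_walkCost hc (p.append q)

theorem exists_isTree_subtype_finsum_le_walkCost (P : V → Prop) [Nonempty {x // P x}] {u v : V}
    (p : K.Walk u v) (hp : ∀ x, x ∈ p.support) :
    ∃ T : SimpleGraph {x // P x}, T.IsTree ∧
      ∑ᶠ e ∈ T.edgeSet, w (e.map Subtype.val) ≤ walkCost c p := by
  let l := p.support.filterMap fun x => if h : P x then some (⟨x, h⟩ : {x // P x}) else none
  have hl : l.map Subtype.val = p.support.filter P := by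
    simp only [l, List.map_filterMap]
    rw [← List.filterMap_eq_filter]
    congr 1; ext x; simp [Option.guard]
  obtain ⟨T, hT, hTw⟩ := List.exists_isTree_finsum_le_sum_consecPairs
    (w := fun e => w (e.map Subtype.val)) (fun e => hw.nonneg hc hK _)
    (fun a b x => by simpa using hw.triangle hc hK a b x) l (fun x => by simp [l, hp])
  refine ⟨T, hT, hTw.trans ?_⟩
  calc ((l.consecPairs).map fun e => w (e.map Subtype.val)).sum
      = ((p.support.filter P).consecPairs.map w).sum := by
        rw [← hl, List.consecPairs_map, List.map_map]; rfl
    _ ≤ (p.support.consecPairs.map w).sum :=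
        List.filter_sublist.sum_consecPairs_le (hw.nonneg hc hK) (hw.triangle hc hK)
    _ ≤ walkCost c p := by
        rw [Walk.consecPairs_support]
        exact List.sum_le_sum fun e he => hw.le_of_mem_edges hc he

end IsPathCostClosure

end SimpleGraph

theorem stmt8_general [Fintype V] (K : SimpleGraph V) (hK : K.IsTree)
    (c : Sym2 V → ℝ) (hc : ∀ e, 0 ≤ c e)
    -- `w` is the metric closure: `w s(a,b)` is the cost of the unique path from `a` to `b`
    (w : Sym2 V → ℝ)
    (hw : ∀ a b, ∀ p : K.Walk a b, p.IsPath → walkCost c p = w s(a, b))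
    (u v : V) (hu : K.degree u = 1) :
    (∃ p : K.Walk u v, (∀ x, x ∈ p.support) ∧
        walkCost c p = 2 * (∑ᶠ e ∈ K.edgeSet, c e) - w s(u, v)) ∧
    ∃ T : SimpleGraph {x : V // K.degree x = 1}, T.IsTree ∧
      (∑ᶠ e ∈ T.edgeSet, w (e.map Subtype.val)) ≤
        2 * (∑ᶠ e ∈ K.edgeSet, c e) - w s(u, v) := by
  obtain ⟨q, hq⟩ := (hK.connected u v).exists_isPath
  obtain ⟨p, hpS, hp⟩ := hK.exists_walk_walkCost_eq hq c
  rw [hw u v q hq] at hp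
  have : Nonempty {x // K.degree x = 1} := ⟨⟨u, hu⟩⟩
  refine ⟨⟨p, hpS, hp⟩, ?_⟩
  rw [← hp]
  exact SimpleGraph.IsPathCostClosure.exists_isTree_subtype_finsum_le_walkCost hw hc
    hK.connected _ p hpS

/-- In a tree `K` with nonnegative edge costs, let `u, v` be a pair of
leaves maximizing the path cost (the diameter `Δ(K) = w s(u,v)`).  Then there is a walk
from `u` to `v` visiting all vertices (hence all leaves) of cost `2·c(K) - Δ(K)`, and
consequently the metric-closure minimum spanning tree on the leaves of `K` has cost at
most `2·c(K) - Δ(K)`. -/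
theorem stmt8 [Fintype V] (K : SimpleGraph V) (hK : K.IsTree)
    (c : Sym2 V → ℝ) (hc : ∀ e, 0 ≤ c e)
    -- `w` is the metric closure: `w s(a,b)` is the cost of the unique path from `a` to `b`
    (w : Sym2 V → ℝ)
    (hw : ∀ a b, ∀ p : K.Walk a b, p.IsPath → walkCost c p = w s(a, b))
    (u v : V) (hu : K.degree u = 1) (hv : K.degree v = 1)
    (hmax : ∀ a b, K.degree a = 1 → K.degree b = 1 → w s(a, b) ≤ w s(u, v)) :
    (∃ p : K.Walk u v, (∀ x, x ∈ p.support) ∧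
        walkCost c p = 2 * (∑ᶠ e ∈ K.edgeSet, c e) - w s(u, v)) ∧
    ∃ T : SimpleGraph {x : V // K.degree x = 1}, T.IsTree ∧
      (∑ᶠ e ∈ T.edgeSet, w (e.map Subtype.val)) ≤
        2 * (∑ᶠ e ∈ K.edgeSet, c e) - w s(u, v) :=
  stmt8_general K hK c hc w hw u v hu
end
end

section
/- For every integer b ≥ 5 and every x ∈ (0, 1/2], x·ln(1 − 2/b + 1/x) ≤ (1/2)·ln(3 − 2/b); moreover the function x ↦ x·ln(1 − 2/b + 1/x) is increasing on (0, 1/2]. -/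
/-!
Write `a = 1 - 2/b ≥ 1/2` and `f x = x log (a + 1/x)`. With `t = 1/x ≥ 2`, the derivative
`f' x = log (a + t) - t / (a + t)` is positive because `log (a + t) ≥ log 2 + 1 - 2/(a + t)`
and `(2 - a)/(a + t) ≤ 3/5 < log 2`. So `f` is strictly increasing on `(0, 1/2]`, and the bound
is its value `f (1/2) = (1/2) log (3 - 2/b)`.
-/

open Real Set

lemma div_add_lt_log_add {a t : ℝ} (ha : 1 / 2 ≤ a) (ht : 2 ≤ t) :
    t / (a + t) < log (a + t) := by
  have hy : 0 < a + t := by linarith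
  have hlog : log 2 + (1 - 2 / (a + t)) ≤ log (a + t) := by
    have h := one_sub_inv_le_log_of_pos (show 0 < (a + t) / 2 by positivity)
    rw [log_div hy.ne' two_ne_zero, inv_div] at h
    linarith
  have hfrac : (2 - a) / (a + t) ≤ 3 / 5 := by
    rw [div_le_iff₀ hy]; linarith
  have hsplit : t / (a + t) = 1 - 2 / (a + t) + (2 - a) / (a + t) := by
    field_simp; ring
  linarith [log_two_gt_d9]

lemma hasDerivAt_mul_log_add_inv {a x : ℝ} (hx : x ≠ 0) (h : a + 1 / x ≠ 0) :
    HasDerivAt (fun x => x * log (a + 1 / x)) (log (a + 1 / x) - 1 / x / (a + 1 / x)) x := by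
  have hinv : HasDerivAt (fun x => a + 1 / x) (-(x ^ 2)⁻¹) x := by
    simpa [one_div] using (hasDerivAt_inv hx).const_add a
  refine ((hasDerivAt_id' x).mul (hinv.log h)).congr_deriv ?_
  field_simp
  ring

lemma strictMonoOn_mul_log_add_inv {a : ℝ} (ha : 1 / 2 ≤ a) :
    StrictMonoOn (fun x => x * log (a + 1 / x)) (Ioc 0 (1 / 2)) := by
  have hderiv : ∀ x ∈ Ioc (0 : ℝ) (1 / 2), 2 ≤ 1 / x ∧
      HasDerivAt (fun x => x * log (a + 1 / x)) (log (a + 1 / x) - 1 / x / (a + 1 / x)) x := by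
    rintro x ⟨hx0, hx⟩
    have ht : 2 ≤ 1 / x := by rw [le_div_iff₀ hx0]; linarith
    exact ⟨ht, hasDerivAt_mul_log_add_inv hx0.ne' (by linarith)⟩
  apply strictMonoOn_of_deriv_pos (convex_Ioc _ _)
  · exact fun x hx => (hderiv x hx).2.continuousAt.continuousWithinAt
  · intro x hx
    rw [interior_Ioc] at hx
    obtain ⟨ht, hf⟩ := hderiv x (Ioo_subset_Ioc_self hx)
    rw [hf.deriv, sub_pos]
    exact div_add_lt_log_add ha ht

/-- For every integer `b ≥ 5` and every `x ∈ (0, 1/2]`,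
`x · ln(1 - 2/b + 1/x) ≤ (1/2) · ln(3 - 2/b)`; moreover `x ↦ x · ln(1 - 2/b + 1/x)` is
increasing on `(0, 1/2]`. -/
theorem stmt12 (b : ℕ) (hb : 5 ≤ b) :
    (∀ x ∈ Set.Ioc (0 : ℝ) (1/2),
      x * Real.log (1 - 2/(b : ℝ) + 1/x) ≤ (1/2) * Real.log (3 - 2/(b : ℝ))) ∧
    StrictMonoOn (fun x : ℝ => x * Real.log (1 - 2/(b : ℝ) + 1/x))
      (Set.Ioc (0 : ℝ) (1/2)) := by
  have ha : 1 / 2 ≤ 1 - 2 / (b : ℝ) := by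
    have hb' : (5 : ℝ) ≤ b := by exact_mod_cast hb
    rw [le_sub_comm, div_le_iff₀ (by linarith)]
    linarith
  have hmono := strictMonoOn_mul_log_add_inv ha
  refine ⟨fun x hx => ?_, hmono⟩
  have hend : (1 / 2 : ℝ) ∈ Ioc 0 (1 / 2) := by norm_num
  calc x * log (1 - 2 / b + 1 / x)
      ≤ 1 / 2 * log (1 - 2 / b + 1 / (1 / 2)) := hmono.monotoneOn hx hend hx.2
    _ = 1 / 2 * log (3 - 2 / b) := by ring_nf
end

section
/- Let G be b-quasi-bipartite with metric assumptions A1, A2, let T* be an optimum Steiner tree, and let π be a partition of V(T*) each of whose parts induces a connected subtree of T*. If every Steiner vertex of T* has degree at least 3, then (r̄(π) − 1) ≥ ((b+1)/(2b+1))·(r(π) − 1), where r(π) is the number of parts of π and r̄(π) the number of parts containing a terminal. -/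
open scoped Classical

noncomputable section

variable {V : Type*}

/-- The graph `G \ R`. -/
def offR (G : SimpleGraph V) (R : Set V) : SimpleGraph V where
  Adj u v := G.Adj u v ∧ u ∉ R ∧ v ∉ R
  symm := ⟨fun _ _ h => ⟨h.1.symm, h.2.2, h.2.1⟩⟩
  loopless := ⟨fun v h => h.1.ne rfl⟩

/-- `G` is `b`-quasi-bipartite. -/
def QuasiBipartite (G : SimpleGraph V) (R : Set V) (b : ℕ) : Prop :=
  ∀ v ∉ R, ({u | (offR G R).Reachable v u}).ncard ≤ b

/-- Assumption A1. -/
def AssumptionA1 (G : SimpleGraph V) (R : Set V) (c : Sym2 V → ℝ) : Prop :=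
  ∀ u ∈ R, ∀ v ∈ R, u ≠ v →
    G.Adj u v ∧ ∀ p : G.Walk u v, c s(u, v) ≤ walkCost c p

/-- Assumption A2. -/
def AssumptionA2 (G : SimpleGraph V) (R : Set V) (c : Sym2 V → ℝ) : Prop :=
  ∀ v ∉ R, ∀ u, u ≠ v → (u ∈ R ∨ (offR G R).Reachable v u) →
    G.Adj u v ∧ ∀ p : G.Walk u v, c s(u, v) ≤ walkCost c p

/-!
Rather than contracting the parts, count edges of `T*` directly. Let `U` be the union of the `s`
terminal-free parts and `k` the number of components of the forest `T*[U]`. Counting the edges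
of `T*[U]` once by parts and once by components shows that `s - k` of them join different parts.
Each component is a connected set of Steiner vertices, so it has at most `b` vertices and
`k ≥ |U| / b`. Since every vertex of `U` has degree at least 3, the handshake lemma gives at least
`|U| + 2k` edges leaving `U`. Both kinds of edges join different parts, and the tree `T*` has
exactly `r - 1` such edges. Hence `r - 1 ≥ s + |U| + k ≥ (2 + 1/b) s`.
-/

theorem Finpartition.mem_of_mem_biUnion {α : Type*} [DecidableEq α] {W : Finset α}
    (P : Finpartition W) {F : Finset (Finset α)} (hF : F ⊆ P.parts) {p : Finset α}
    (hp : p ∈ P.parts) {v : α} (hvp : v ∈ p) (hvF : v ∈ F.biUnion id) : p ∈ F := by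
  obtain ⟨q, hq, hvq⟩ := Finset.mem_biUnion.1 hvF
  rwa [P.eq_of_mem_parts hp (hF hq) hvp hvq]

namespace SimpleGraph

open Finset

variable {α : Type*} {G : SimpleGraph α}

theorem isAcyclic_of_isAcyclic_induce {s : Set α} (h : (G.induce s).IsAcyclic)
    (hs : G.support ⊆ s) : G.IsAcyclic := fun _ c hc =>
  h (c.induce s fun _ hx => hs (mem_support_of_mem_walk_support c hc.not_nil hx))
    (Walk.IsCycle.of_map (f := (Embedding.induce s).toHom) (by rwa [Walk.map_induce]))

section Components

variable (G) (U : Finset α)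

def componentFinset (c : (G.induce U).ConnectedComponent) : Finset α :=
  {v ∈ U | ∃ hv : v ∈ U, (G.induce U).connectedComponentMk ⟨v, hv⟩ = c}

variable {G U}

theorem mem_componentFinset {c : (G.induce U).ConnectedComponent} {v : α} :
    v ∈ G.componentFinset U c ↔ ∃ hv : v ∈ U, (G.induce U).connectedComponentMk ⟨v, hv⟩ = c := by
  simp only [componentFinset, mem_filter, and_iff_right_iff_imp]
  exact fun ⟨hv, _⟩ => hv

theorem connected_induce_componentFinset (c : (G.induce U).ConnectedComponent) :
    (G.induce (G.componentFinset U c)).Connected := by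
  let f : c.toSimpleGraph →g G.induce (G.componentFinset U c) :=
    { toFun := fun x => ⟨x.1.1, mem_componentFinset.2 ⟨x.1.2, x.2⟩⟩
      map_rel' := fun h => h }
  refine c.connected_toSimpleGraph.map f fun y => ?_
  obtain ⟨hy, hyc⟩ := mem_componentFinset.1 y.2
  exact ⟨⟨⟨y.1, hy⟩, hyc⟩, rfl⟩

variable [Fintype (G.induce U).ConnectedComponent]

theorem pairwiseDisjoint_componentFinset :
    ((univ : Finset (G.induce U).ConnectedComponent) : Set _).PairwiseDisjoint
      (G.componentFinset U) := by
  intro c _ c' _ hcc'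
  refine Finset.disjoint_left.2 fun v hv hv' => hcc' ?_
  obtain ⟨_, rfl⟩ := mem_componentFinset.1 hv
  obtain ⟨_, rfl⟩ := mem_componentFinset.1 hv'
  rfl

theorem biUnion_componentFinset [DecidableEq α] : univ.biUnion (G.componentFinset U) = U := by
  ext v
  simp only [mem_biUnion, mem_univ, true_and, mem_componentFinset]
  exact ⟨fun ⟨_, hv, _⟩ => hv, fun hv => ⟨_, hv, rfl⟩⟩

end Components

variable [Fintype α] [DecidableEq α] [DecidableRel G.Adj]

theorem card_edgeFinset_induce (s : Finset α) :
    #(G.induce s).edgeFinset = #(G.edgeFinset ∩ s.sym2) := by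
  rw [← card_filter_edgeFinset_toFinset_subset, filter_edgeFinset_toFinset_subset]

theorem card_edgeFinset_inter_sym2_add_one (hG : G.IsAcyclic) {s : Finset α}
    (hs : (G.induce s).Connected) : #(G.edgeFinset ∩ s.sym2) + 1 = #s := by
  rw [← card_edgeFinset_induce, IsTree.card_edgeFinset ⟨hs, hG.induce _⟩]
  simp

variable (G) in
def crossingEdges {ι : Type*} (s : Finset ι) (f : ι → Finset α) : Finset (Sym2 α) :=
  {e ∈ G.edgeFinset ∩ (s.biUnion f).sym2 | ∀ i ∈ s, e ∉ (f i).sym2}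

variable {ι : Type*} {s : Finset ι} {f : ι → Finset α}

theorem mem_crossingEdges {e : Sym2 α} :
    e ∈ G.crossingEdges s f ↔
      e ∈ G.edgeFinset ∧ e ∈ (s.biUnion f).sym2 ∧ ∀ i ∈ s, e ∉ (f i).sym2 := by
  rw [crossingEdges, mem_filter, mem_inter, and_assoc]

theorem card_edgeFinset_inter_sym2_biUnion (hf : (s : Set ι).PairwiseDisjoint f) :
    #(G.edgeFinset ∩ (s.biUnion f).sym2) =
      ∑ i ∈ s, #(G.edgeFinset ∩ (f i).sym2) + #(G.crossingEdges s f) := by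
  have hinner : {e ∈ G.edgeFinset ∩ (s.biUnion f).sym2 | ∃ i ∈ s, e ∈ (f i).sym2} =
      s.biUnion fun i => G.edgeFinset ∩ (f i).sym2 := by
    ext e
    simp only [mem_filter, mem_biUnion, mem_inter]
    constructor
    · rintro ⟨⟨he, -⟩, i, hi, hei⟩
      exact ⟨i, hi, he, hei⟩
    · rintro ⟨i, hi, he, hei⟩
      refine ⟨⟨he, mem_sym2_iff.2 fun v hv => mem_biUnion.2 ⟨i, hi, mem_sym2_iff.1 hei v hv⟩⟩,
        i, hi, hei⟩
  have hdisj : (s : Set ι).PairwiseDisjoint fun i => G.edgeFinset ∩ (f i).sym2 := by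
    intro i hi j hj hij
    refine Finset.disjoint_left.2 fun (e : Sym2 α) hei hej =>
      Finset.disjoint_left.1 (hf hi hj hij)
      (mem_sym2_iff.1 (mem_inter.1 hei).2 _ e.out_fst_mem)
      (mem_sym2_iff.1 (mem_inter.1 hej).2 _ e.out_fst_mem)
  rw [← card_filter_add_card_filter_not (p := fun e => ∃ i ∈ s, e ∈ (f i).sym2), hinner,
    card_biUnion hdisj]
  simp only [crossingEdges, not_exists, not_and]

theorem card_edgeFinset_inter_sym2_biUnion_add_card (hG : G.IsAcyclic)
    (hf : (s : Set ι).PairwiseDisjoint f) (hconn : ∀ i ∈ s, (G.induce (f i)).Connected) :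
    #(G.edgeFinset ∩ (s.biUnion f).sym2) + #s = #(s.biUnion f) + #(G.crossingEdges s f) := by
  rw [card_edgeFinset_inter_sym2_biUnion hf, card_biUnion hf, card_eq_sum_ones s,
    add_right_comm, ← sum_add_distrib,
    sum_congr rfl fun i hi => card_edgeFinset_inter_sym2_add_one hG (hconn i hi)]

theorem card_crossingEdges_parts_add_one (hG : G.IsAcyclic) {W : Finset α}
    (hW : (G.induce W).Connected) (P : Finpartition W)
    (hP : ∀ p ∈ P.parts, (G.induce p).Connected) :
    #(G.crossingEdges P.parts id) + 1 = #P.parts := by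
  have hparts := card_edgeFinset_inter_sym2_biUnion_add_card hG P.disjoint hP
  rw [P.biUnion_parts] at hparts
  have htree := card_edgeFinset_inter_sym2_add_one hG hW
  omega

theorem crossingEdges_componentFinset (U : Finset α) :
    G.crossingEdges univ (G.componentFinset U) = ∅ := by
  refine eq_empty_of_forall_notMem fun e he => ?_
  simp only [crossingEdges, biUnion_componentFinset, mem_filter, mem_inter, mem_univ,
    true_implies] at he
  obtain ⟨⟨he, heU⟩, hcross⟩ := he
  induction e with
  | _ u v =>
    have hu : u ∈ U := mem_sym2_iff.1 heU u (Sym2.mem_mk_left u v)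
    have hv : v ∈ U := mem_sym2_iff.1 heU v (Sym2.mem_mk_right u v)
    have huv : (G.induce U).Adj ⟨u, hu⟩ ⟨v, hv⟩ := mem_edgeFinset.1 he
    refine hcross ((G.induce U).connectedComponentMk ⟨u, hu⟩) (mk_mem_sym2_iff.2 ⟨?_, ?_⟩)
    · exact mem_componentFinset.2 ⟨hu, rfl⟩
    · exact mem_componentFinset.2
        ⟨hv, (ConnectedComponent.connectedComponentMk_eq_of_adj huv).symm⟩

theorem mul_card_edgeFinset_inter_sym2_add_card_le (hG : G.IsAcyclic) {U : Finset α} {b : ℕ}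
    (hsmall : ∀ S ⊆ U, (G.induce S).Connected → #S ≤ b) :
    b * #(G.edgeFinset ∩ U.sym2) + #U ≤ b * #U := by
  have hforest := card_edgeFinset_inter_sym2_biUnion_add_card hG
    (pairwiseDisjoint_componentFinset (U := U)) fun c _ => connected_induce_componentFinset c
  rw [biUnion_componentFinset, crossingEdges_componentFinset, card_empty, add_zero] at hforest
  have hcard : #U ≤ b * #(univ : Finset (G.induce U).ConnectedComponent) := by
    conv_lhs => rw [← biUnion_componentFinset (G := G) (U := U)]
    rw [mul_comm]
    exact card_biUnion_le_card_mul _ _ _ fun c _ => hsmall _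
      (fun v hv => (mem_componentFinset.1 hv).1) (connected_induce_componentFinset c)
  linarith [congrArg (b * ·) hforest, Nat.mul_le_mul_left b hcard]

variable (G) in
def boundaryPairs (U : Finset α) : Finset (Σ _ : α, α) :=
  U.sigma fun v => G.neighborFinset v \ U

theorem sum_degree_eq (U : Finset α) :
    ∑ v ∈ U, G.degree v = 2 * #(G.edgeFinset ∩ U.sym2) + #(G.boundaryPairs U) := by
  have hinduce : ∑ v ∈ U, #(G.neighborFinset v ∩ U) = 2 * #(G.edgeFinset ∩ U.sym2) := by
    rw [← card_edgeFinset_induce, ← sum_degrees_eq_twice_card_edges, ← Finset.sum_coe_sort U]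
    refine sum_congr rfl fun v _ => ?_
    have h := congrArg card (map_neighborFinset_induce (G := G) (s := (U : Set α)) v)
    rw [card_map, toFinset_coe, card_neighborFinset_eq_degree] at h
    convert h.symm
  rw [boundaryPairs, card_sigma, ← hinduce, ← sum_add_distrib]
  exact sum_congr rfl fun v _ => by rw [card_inter_add_card_sdiff, card_neighborFinset_eq_degree]

theorem crossingEdges_subset_crossingEdges_parts {W : Finset α} (P : Finpartition W)
    (hsupp : G.support ⊆ W) {F : Finset (Finset α)} (hF : F ⊆ P.parts) :
    G.crossingEdges F id ⊆ G.crossingEdges P.parts id := by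
  intro e he
  rw [mem_crossingEdges] at he ⊢
  obtain ⟨heE, heF, hnot⟩ := he
  rw [P.biUnion_parts]
  refine ⟨heE, ?_, fun p hp hep => hnot p ?_ hep⟩
  · simpa using edgeFinset_subset_sym2_of_support_subset hsupp heE
  · exact P.mem_of_mem_biUnion hF hp (mem_sym2_iff.1 hep _ e.out_fst_mem)
      (mem_sym2_iff.1 heF _ e.out_fst_mem)

theorem card_crossingEdges_add_card_boundaryPairs_le {W : Finset α} (P : Finpartition W)
    (hsupp : G.support ⊆ W) {F : Finset (Finset α)} (hF : F ⊆ P.parts) :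
    #(G.crossingEdges F id) + #(G.boundaryPairs (F.biUnion id)) ≤
      #(G.crossingEdges P.parts id) := by
  set U := F.biUnion id
  have himage : (G.boundaryPairs U).image (fun x => s(x.1, x.2)) ⊆
      G.crossingEdges P.parts id \ G.crossingEdges F id := by
    intro e he
    obtain ⟨⟨u, v⟩, hx, rfl⟩ := mem_image.1 he
    simp only [boundaryPairs, mem_sigma, mem_sdiff, mem_neighborFinset] at hx
    obtain ⟨hu, huv, hv⟩ := hx
    have huvE : s(u, v) ∈ G.edgeFinset := mem_edgeFinset.2 huv
    rw [mem_sdiff, mem_crossingEdges, mem_crossingEdges, P.biUnion_parts]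
    refine ⟨⟨huvE, ?_, fun p hp hp' => hv ?_⟩,
      fun h => hv (mk_mem_sym2_iff.1 h.2.1).2⟩
    · simpa using edgeFinset_subset_sym2_of_support_subset hsupp huvE
    · rw [id, mk_mem_sym2_iff] at hp'
      exact mem_biUnion.2 ⟨p, P.mem_of_mem_biUnion hF hp hp'.1 hu, hp'.2⟩
  have hinj : Set.InjOn (fun x => s(x.1, x.2)) (G.boundaryPairs U : Set (Σ _ : α, α)) := by
    rintro ⟨u, v⟩ hx ⟨u', v'⟩ hx' h
    simp only [boundaryPairs, coe_sigma, Set.mem_sigma_iff, mem_coe, coe_sdiff, Set.mem_sdiff]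
      at hx hx'
    rcases Sym2.eq_iff.1 h with ⟨rfl, rfl⟩ | ⟨rfl, rfl⟩
    · rfl
    · exact absurd hx.1 hx'.2.2
  calc #(G.crossingEdges F id) + #(G.boundaryPairs U)
      = #(G.crossingEdges F id) + #((G.boundaryPairs U).image fun x => s(x.1, x.2)) := by
        rw [card_image_of_injOn hinj]
    _ ≤ #(G.crossingEdges F id) + #(G.crossingEdges P.parts id \ G.crossingEdges F id) := by
        gcongr
    _ = #(G.crossingEdges P.parts id) := by rw [add_comm, card_sdiff_add_card_eq_card
      (crossingEdges_subset_crossingEdges_parts P hsupp hF)]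

theorem mul_card_filter_disjoint_parts_add_le {W : Finset α} (hT : (G.induce W).IsTree)
    (hsupp : G.support ⊆ W) (P : Finpartition W) (hP : ∀ p ∈ P.parts, (G.induce p).Connected)
    (R : Finset α) {b : ℕ} (hdeg : ∀ v ∈ W, v ∉ R → 3 ≤ G.degree v)
    (hsmall : ∀ S : Finset α, Disjoint S R → (G.induce S).Connected → #S ≤ b) :
    (2 * b + 1) * #{p ∈ P.parts | Disjoint p R} + b ≤ b * #P.parts := by
  have hG := isAcyclic_of_isAcyclic_induce hT.isAcyclic hsupp
  set F := {p ∈ P.parts | Disjoint p R}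
  have hFP : F ⊆ P.parts := filter_subset _ _
  set U := F.biUnion id
  have hUR : Disjoint U R := (disjoint_biUnion_left _ _ _).2 fun p hp => (mem_filter.1 hp).2
  have hUW : U ⊆ W := P.biUnion_parts ▸ biUnion_subset_biUnion_of_subset_left _ hFP
  have hFdisj : (F : Set (Finset α)).PairwiseDisjoint id := P.disjoint.subset hFP
  have htree := card_crossingEdges_parts_add_one hG hT.connected P hP
  have hsteiner := card_edgeFinset_inter_sym2_biUnion_add_card hG hFdisj fun p hp => hP p (hFP hp)
  have hforest := mul_card_edgeFinset_inter_sym2_add_card_le hG (U := U) fun S hS hS' =>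
    hsmall S (hUR.mono_left hS) hS'
  have hdegsum : 3 * #U ≤ 2 * #(G.edgeFinset ∩ U.sym2) + #(G.boundaryPairs U) := by
    rw [← sum_degree_eq, mul_comm, ← smul_eq_mul, ← sum_const]
    exact sum_le_sum fun v hv => hdeg v (hUW hv) (Finset.disjoint_left.1 hUR hv)
  have hbd := card_crossingEdges_add_card_boundaryPairs_le P hsupp hFP
  have hFU : #F ≤ #U := card_le_card_biUnion hFdisj fun p hp => P.nonempty_of_mem_parts (hFP hp)
  linarith [congrArg (b * ·) htree, congrArg (b * ·) hsteiner, Nat.mul_le_mul_left b hbd,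
    Nat.mul_le_mul_left b hdegsum, Nat.mul_le_mul_left b hFU]

end SimpleGraph

theorem QuasiBipartite.card_le_of_connected [Finite V] {G : SimpleGraph V} {R : Set V} {b : ℕ}
    (hqb : QuasiBipartite G R b) {H : SimpleGraph V} (hH : H ≤ G) {S : Finset V}
    (hSR : ∀ v ∈ S, v ∉ R) (hS : (H.induce S).Connected) : S.card ≤ b := by
  obtain ⟨⟨v, hv⟩⟩ := hS.nonempty
  let f : H.induce S →g offR G R := ⟨fun x => x.1, fun {x y} h => ⟨hH h, hSR _ x.2, hSR _ y.2⟩⟩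
  calc S.card = (S : Set V).ncard := (Set.ncard_coe_finset S).symm
    _ ≤ {u | (offR G R).Reachable v u}.ncard :=
      Set.ncard_le_ncard (fun u hu => (hS.preconnected ⟨v, hv⟩ ⟨u, hu⟩).map f) (Set.toFinite _)
    _ ≤ b := hqb v (hSR v hv)

theorem stmt15_general [Fintype V] (G : SimpleGraph V) (R : Finset V)
    (b : ℕ)
    (hqb : QuasiBipartite G (R : Set V) b)
    (Tstar : G.Subgraph) (hTt : Tstar.coe.IsTree)
    (hdeg : ∀ v ∈ Tstar.verts, v ∉ (R : Set V) → 3 ≤ Tstar.degree v)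
    (W : Finset V) (hW : (W : Set V) = Tstar.verts)
    (π : Finpartition W)
    (hconn : ∀ P ∈ π.parts, ((Tstar.induce (P : Set V)).coe).Connected) :
    ((b : ℝ) + 1) / (2 * (b : ℝ) + 1) * ((π.parts.card : ℝ) - 1) ≤
      ((π.parts.filter fun P => ∃ t ∈ P, t ∈ R).card : ℝ) - 1 := by
  have hT : (Tstar.spanningCoe.induce W).IsTree := by rw [hW]; exact hTt
  have hsupp : Tstar.spanningCoe.support ⊆ W := hW ▸ fun v ⟨_, hvw⟩ => Tstar.edge_vert hvw
  have hP : ∀ p ∈ π.parts, (Tstar.spanningCoe.induce p).Connected := fun p hp =>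
    (hconn p hp).map (⟨id, fun h => h.2.2⟩ : (Tstar.induce p).coe →g _) Function.surjective_id
  have hdegT : ∀ v ∈ W, v ∉ R → 3 ≤ Tstar.spanningCoe.degree v := fun v hv hvR => by
    rw [SimpleGraph.Subgraph.degree_spanningCoe]
    exact hdeg v (hW ▸ hv) hvR
  have hbound := SimpleGraph.mul_card_filter_disjoint_parts_add_le hT hsupp π hP R hdegT
    fun S hSR hS => hqb.card_le_of_connected Tstar.spanningCoe_le
      (fun v hv => Finset.disjoint_left.1 hSR hv) hS
  have hcount := Finset.card_filter_add_card_filter_not (s := π.parts)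
    (p := fun p => ∃ t ∈ p, t ∈ R)
  simp only [not_exists, not_and, ← Finset.disjoint_left] at hcount
  rw [← Nat.cast_le (α := ℝ)] at hbound
  rw [← hcount] at hbound ⊢
  push_cast at hbound ⊢
  rw [div_mul_eq_mul_div, div_le_iff₀ (by positivity)]
  linarith

/-- Let `G` be `b`-quasi-bipartite (with metric assumptions A1, A2),
`T*` an optimum Steiner tree, and `π` a partition of `V(T*)` each of whose parts
induces a connected subtree of `T*`.  If every Steiner vertex of `T*` has degree at
least 3, then `r̄(π) − 1 ≥ ((b+1)/(2b+1)) · (r(π) − 1)`. -/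
theorem stmt15 [Fintype V] (G : SimpleGraph V) (R : Finset V)
    (c : Sym2 V → ℝ) (hc : ∀ e, 0 ≤ c e) (b : ℕ) (hb : 1 ≤ b)
    (hqb : QuasiBipartite G (R : Set V) b)
    (hA1 : AssumptionA1 G (R : Set V) c) (hA2 : AssumptionA2 G (R : Set V) c)
    (Tstar : G.Subgraph) (hTt : Tstar.coe.IsTree) (hTR : (R : Set V) ⊆ Tstar.verts)
    (hTopt : ∀ T' : G.Subgraph, T'.coe.IsTree → (R : Set V) ⊆ T'.verts →
      (∑ᶠ e ∈ Tstar.edgeSet, c e) ≤ ∑ᶠ e ∈ T'.edgeSet, c e)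
    (hdeg : ∀ v ∈ Tstar.verts, v ∉ (R : Set V) → 3 ≤ Tstar.degree v)
    (W : Finset V) (hW : (W : Set V) = Tstar.verts)
    (π : Finpartition W)
    (hconn : ∀ P ∈ π.parts, ((Tstar.induce (P : Set V)).coe).Connected) :
    ((b : ℝ) + 1) / (2 * (b : ℝ) + 1) * ((π.parts.card : ℝ) - 1) ≤
      ((π.parts.filter fun P => ∃ t ∈ P, t ∈ R).card : ℝ) - 1 :=
  stmt15_general G R b hqb Tstar hTt hdeg W hW π hconn
end
end
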